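/- In the domain R = K[a, v2, v1], the three-term complex R --(v2, -a^{r+1}, -1)^T--> R^3 --M--> R^3 --(v1, v2, a^{r+1}v1 + v2^{t-1}A)--> R, where M is the 3x3 matrix with rows (a^{r+1}, v2, 0), (v2^{t-2}A, -v1, a^{r+1}v1 + v2^{t-1}A), (-1, 0, -v2), is exact at both middle terms, the leftmost map is injective, and the cokernel of the rightmost map is R/(v1, v2). -/

import Mathlib

noncomputable section

open MvPolynomial

/-- `R = K[a, v₂, v₁]`, with `a = X 0`, `v₂ = X 1`, `v₁ = X 2`. -/
abbrev R3 (K : Type*) [Field K] := MvPolynomial (Fin 3) K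

variable (K : Type*) [Field K]

/-- The inclusion of `K[a, v₂]` into `R = K[a, v₂, v₁]`. -/
def emb (A0 : MvPolynomial (Fin 2) K) : R3 K := aeval ![X 0, X 1] A0

/-- The middle matrix of the locally free resolution, on the chart `U₁`. -/
def matM (r t : ℕ) (A : R3 K) : Matrix (Fin 3) (Fin 3) (R3 K) :=
  !![X 0 ^ (r + 1), X 1, 0;
     X 1 ^ (t - 2) * A, -(X 2), X 0 ^ (r + 1) * X 2 + X 1 ^ (t - 1) * A;
     -1, 0, -(X 1)]

/-- The left-most map `R → R³`, given by the column `(v₂, -a^{r+1}, -1)ᵀ`. -/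
def d3 (r : ℕ) : R3 K →ₗ[R3 K] (Fin 3 → R3 K) :=
  LinearMap.pi fun i => (![X 1, -(X 0 ^ (r + 1)), -1] : Fin 3 → R3 K) i • LinearMap.id

/-- The middle map `R³ → R³`. -/
def d2 (r t : ℕ) (A : R3 K) : (Fin 3 → R3 K) →ₗ[R3 K] (Fin 3 → R3 K) :=
  Matrix.toLin' (matM K r t A)

/-- The right-most map `R³ → R`, given by the row `(v₁, v₂, a^{r+1}v₁ + v₂^{t-1}A)`. -/
def d1 (r t : ℕ) (A : R3 K) : (Fin 3 → R3 K) →ₗ[R3 K] R3 K :=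
  ∑ i, (![X 2, X 1, X 0 ^ (r + 1) * X 2 + X 1 ^ (t - 1) * A] : Fin 3 → R3 K) i •
    LinearMap.proj i

/-! Both composites vanish by expanding the matrix products. Conversely, a cycle is solved for
coordinate by coordinate, the unit entries `-1` giving the preimage directly; the remaining
coordinates only require cancelling `v₂`, a nonzerodivisor of `R`, and cancelling `v₁` modulo `v₂`,
which is possible because `v₂` is prime and does not divide `v₁`. -/

lemma d3_apply (r : ℕ) (p : R3 K) : d3 K r p = ![X 1 * p, -(X 0 ^ (r + 1)) * p, -p] := by
  ext i
  fin_cases i <;> simp [d3]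

lemma d2_apply (r s : ℕ) (A : R3 K) (x : Fin 3 → R3 K) :
    d2 K r (s + 2) A x = ![X 0 ^ (r + 1) * x 0 + X 1 * x 1,
      X 1 ^ s * A * x 0 - X 2 * x 1 + (X 0 ^ (r + 1) * X 2 + X 1 ^ (s + 1) * A) * x 2,
      -x 0 - X 1 * x 2] := by
  ext i
  fin_cases i <;> simp [d2, matM, Matrix.mulVec, dotProduct, Fin.sum_univ_three] <;> ring

lemma d1_apply (r s : ℕ) (A : R3 K) (x : Fin 3 → R3 K) :
    d1 K r (s + 1) A x = X 2 * x 0 + X 1 * x 1 + (X 0 ^ (r + 1) * X 2 + X 1 ^ s * A) * x 2 := by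
  simp [d1, Fin.sum_univ_three]

lemma d3_injective (r : ℕ) : Function.Injective (d3 K r) := fun p q h => by
  simpa [d3_apply] using congrFun h 2

lemma d2_comp_d3 (r s : ℕ) (A : R3 K) : d2 K r (s + 2) A ∘ₗ d3 K r = 0 := by
  refine LinearMap.ext fun p => ?_
  rw [LinearMap.comp_apply, d3_apply, d2_apply, LinearMap.zero_apply]
  funext i
  fin_cases i <;>
    simp only [Fin.zero_eta, Fin.mk_one, Fin.reduceFinMk, Matrix.cons_val, Pi.zero_apply] <;> ring

lemma ker_d2_le_range_d3 (r s : ℕ) (A : R3 K) :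
    LinearMap.ker (d2 K r (s + 2) A) ≤ LinearMap.range (d3 K r) := by
  intro x hx
  have h := LinearMap.mem_ker.mp hx
  rw [d2_apply] at h
  have h0 := congrFun h 0
  have h2 := congrFun h 2
  simp only [Matrix.cons_val, Pi.zero_apply] at h0 h2
  have hx0 : x 0 = X 1 * -x 2 := by linear_combination -h2
  have hx1 : x 1 = -X 0 ^ (r + 1) * -x 2 :=
    (isRegular_X (n := 1)).left (by linear_combination h0 - X 0 ^ (r + 1) * hx0)
  refine ⟨-x 2, ?_⟩
  ext i
  fin_cases i <;> simp [d3_apply, hx0, hx1]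

lemma range_d3_eq_ker_d2 (r s : ℕ) (A : R3 K) :
    LinearMap.range (d3 K r) = LinearMap.ker (d2 K r (s + 2) A) :=
  le_antisymm (LinearMap.range_le_ker_iff.mpr (d2_comp_d3 K r s A)) (ker_d2_le_range_d3 K r s A)

lemma d1_comp_d2 (r s : ℕ) (A : R3 K) : d1 K r (s + 2) A ∘ₗ d2 K r (s + 2) A = 0 := by
  refine LinearMap.ext fun x => ?_
  simp only [LinearMap.comp_apply, d2_apply, d1_apply, Matrix.cons_val_zero, Matrix.cons_val_one,
    Matrix.cons_val, LinearMap.zero_apply]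
  ring

lemma ker_d1_le_range_d2 (r s : ℕ) (A : R3 K) :
    LinearMap.ker (d1 K r (s + 2) A) ≤ LinearMap.range (d2 K r (s + 2) A) := by
  intro x hx
  have h := LinearMap.mem_ker.mp hx
  rw [d1_apply] at h
  have hdvd : (X 1 : R3 K) ∣ X 2 * (x 0 + X 0 ^ (r + 1) * x 2) :=
    ⟨-(x 1 + X 1 ^ s * A * x 2), by linear_combination h⟩
  obtain ⟨q, hq⟩ := (X_dvd_mul_iff.mp hdvd).resolve_left (by simp)
  have hx1 : x 1 = -X 2 * q - X 1 ^ s * A * x 2 :=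
    (isRegular_X (n := 1)).left (by linear_combination h - X 2 * hq)
  refine ⟨![-x 2, q, 0], ?_⟩
  funext i
  fin_cases i
  · simp [d2_apply]
    linear_combination -hq
  · simp [d2_apply, hx1]
    ring
  · simp [d2_apply]

lemma range_d2_eq_ker_d1 (r s : ℕ) (A : R3 K) :
    LinearMap.range (d2 K r (s + 2) A) = LinearMap.ker (d1 K r (s + 2) A) :=
  le_antisymm (LinearMap.range_le_ker_iff.mpr (d1_comp_d2 K r s A)) (ker_d1_le_range_d2 K r s A)

lemma range_d1_eq_span (r s : ℕ) (A : R3 K) :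
    LinearMap.range (d1 K r (s + 2) A) = Submodule.span (R3 K) {(X 2 : R3 K), X 1} := by
  apply le_antisymm
  · rintro _ ⟨x, rfl⟩
    rw [d1_apply, Submodule.mem_span_pair]
    exact ⟨x 0 + X 0 ^ (r + 1) * x 2, x 1 + X 1 ^ s * A * x 2, by simp only [smul_eq_mul]; ring⟩
  · rw [Submodule.span_le, Set.insert_subset_iff, Set.singleton_subset_iff]
    exact ⟨⟨![1, 0, 0], by simp [d1_apply]⟩, ⟨![0, 1, 0], by simp [d1_apply]⟩⟩

theorem stmt8 (r t : ℕ) (ht : 2 ≤ t) (A0 : MvPolynomial (Fin 2) K) :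
    Function.Injective (d3 K r) ∧
    LinearMap.range (d3 K r) = LinearMap.ker (d2 K r t (emb K A0)) ∧
    LinearMap.range (d2 K r t (emb K A0)) = LinearMap.ker (d1 K r t (emb K A0)) ∧
    LinearMap.range (d1 K r t (emb K A0)) =
      Submodule.span (R3 K) {(X 2 : R3 K), X 1} := by
  obtain ⟨s, rfl⟩ := Nat.exists_eq_add_of_le' ht
  exact ⟨d3_injective K r, range_d3_eq_ker_d2 K r s _, range_d2_eq_ker_d1 K r s _,
    range_d1_eq_span K r s _⟩
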